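/- Consider the HLM Markov decision process with finite state set S̃ containing distinguished absorbing states g (goal) and x (fail), action set C, and parametric transitions: from state s̃ under action c ∈ C(s̃), the process moves to succ(c) with probability p_c and to x with probability 1 − p_c. Let μ be any stationary policy, and let q_c ∈ [0,1] satisfy q_c ≥ p_c for all c ∈ C. Then the probability of eventually reaching g from the initial state under μ with parameters (q_c) is at least the probability of eventually reaching g under μ with parameters (p_c). -/
import Mathlib


/-- probability of reaching the goal `g` within `T` high-level steps, from `s`, in the
HLM under stationary policy `μ` and success parameters `p`: action `c ∈ avail s` moves to
`succ c` with probability `p c` and to the absorbing failure state `x` with probability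
`1 - p c`; `g` and `x` are absorbing. -/
noncomputable def hlmV {St C : Type*} [DecidableEq St] (avail : St → Finset C)
    (succ : C → St) (μ : St → C → ℝ) (p : C → ℝ) (g x : St) : ℕ → St → ℝ
  | 0, s => if s = g then 1 else 0
  | T + 1, s =>
    if s = g then 1
    else if s = x then 0
    else ∑ c ∈ avail s, μ s c *
      (p c * hlmV avail succ μ p g x T (succ c) + (1 - p c) * hlmV avail succ μ p g x T x)

lemma hlmV_x {St C : Type*} [DecidableEq St] (avail : St → Finset C)
    (succ : C → St) (μ : St → C → ℝ) (p : C → ℝ) (g x : St) (hgx : g ≠ x) (T : ℕ) :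
    hlmV avail succ μ p g x T x = 0 := by
  cases T with
  | zero => simp [hlmV, hgx.symm]
  | succ T => simp [hlmV, hgx.symm]

lemma hlmV_nonneg {St C : Type*} [DecidableEq St] (avail : St → Finset C)
    (succ : C → St) (μ : St → C → ℝ) (p : C → ℝ) (g x : St)
    (hp0 : ∀ c, 0 ≤ p c) (hp1 : ∀ c, p c ≤ 1) (hμ0 : ∀ s c, 0 ≤ μ s c) :
    ∀ T s, 0 ≤ hlmV avail succ μ p g x T s := by
  intro T
  induction T with
  | zero => intro s; simp [hlmV]; positivity
  | succ T ih =>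
    intro s
    rw [hlmV]
    split
    · norm_num
    split
    · norm_num
    refine Finset.sum_nonneg fun c _ => mul_nonneg (hμ0 _ _) ?_
    have h1 := ih (succ c); have h2 := ih x
    nlinarith [hp0 c, hp1 c]

lemma hlmV_le_one {St C : Type*} [DecidableEq St] (avail : St → Finset C)
    (succ : C → St) (μ : St → C → ℝ) (p : C → ℝ) (g x : St)
    (hp0 : ∀ c, 0 ≤ p c) (hp1 : ∀ c, p c ≤ 1) (hμ0 : ∀ s c, 0 ≤ μ s c)
    (hμ1 : ∀ s, s ≠ g → s ≠ x → ∑ c ∈ avail s, μ s c = 1) :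
    ∀ T s, hlmV avail succ μ p g x T s ≤ 1 := by
  intro T
  induction T with
  | zero => intro s; simp [hlmV]; split <;> norm_num
  | succ T ih =>
    intro s
    rw [hlmV]
    split
    · norm_num
    split
    · norm_num
    rename_i hg hx
    calc ∑ c ∈ avail s, μ s c *
          (p c * hlmV avail succ μ p g x T (succ c) + (1 - p c) * hlmV avail succ μ p g x T x)
        ≤ ∑ c ∈ avail s, μ s c := by
          refine Finset.sum_le_sum fun c _ => ?_
          have h1 := ih (succ c); have h2 := ih x
          have h1' := hlmV_nonneg avail succ μ p g x hp0 hp1 hμ0 T (succ c)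
          have h2' := hlmV_nonneg avail succ μ p g x hp0 hp1 hμ0 T x
          have e1 : p c * hlmV avail succ μ p g x T (succ c) ≤ p c :=
            mul_le_of_le_one_right (hp0 c) h1
          have e2 : (1 - p c) * hlmV avail succ μ p g x T x ≤ 1 - p c :=
            mul_le_of_le_one_right (by linarith [hp1 c]) h2
          have : p c * hlmV avail succ μ p g x T (succ c) +
              (1 - p c) * hlmV avail succ μ p g x T x ≤ 1 := by linarith
          nlinarith [hμ0 s c]
      _ = 1 := hμ1 s hg hx

lemma hlmV_mono {St C : Type*} [DecidableEq St] (avail : St → Finset C)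
    (succ : C → St) (μ : St → C → ℝ) (p q : C → ℝ) (g x : St) (hgx : g ≠ x)
    (hp0 : ∀ c, 0 ≤ p c) (hq1 : ∀ c, q c ≤ 1) (hpq : ∀ c, p c ≤ q c)
    (hμ0 : ∀ s c, 0 ≤ μ s c) :
    ∀ T s, hlmV avail succ μ p g x T s ≤ hlmV avail succ μ q g x T s := by
  have hp1 : ∀ c, p c ≤ 1 := fun c => (hpq c).trans (hq1 c)
  have hq0 : ∀ c, 0 ≤ q c := fun c => (hp0 c).trans (hpq c)
  intro T
  induction T with
  | zero => intro s; simp [hlmV]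
  | succ T ih =>
    intro s
    rw [hlmV, hlmV]
    split
    · exact le_refl _
    split
    · exact le_refl _
    refine Finset.sum_le_sum fun c _ => ?_
    rw [hlmV_x avail succ μ p g x hgx, hlmV_x avail succ μ q g x hgx]
    simp only [mul_zero, add_zero]
    refine mul_le_mul_of_nonneg_left ?_ (hμ0 s c)
    have hnn := hlmV_nonneg avail succ μ p g x hp0 hp1 hμ0 T (succ c)
    have := ih (succ c)
    nlinarith [hpq c, hq0 c]

/-- Increasing each per-action success probability monotonically increases the
goal-reaching probability of the HLM under any fixed stationary policy `μ`. -/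
theorem stmt5 {St C : Type*} [Fintype St] [Fintype C] [DecidableEq St]
    (avail : St → Finset C) (succ : C → St) (μ : St → C → ℝ) (p q : C → ℝ)
    (g x sI : St) (hgx : g ≠ x)
    (hp0 : ∀ c, 0 ≤ p c) (hq1 : ∀ c, q c ≤ 1) (hpq : ∀ c, p c ≤ q c)
    (hμ0 : ∀ s c, 0 ≤ μ s c) (hμ1 : ∀ s, s ≠ g → s ≠ x → ∑ c ∈ avail s, μ s c = 1) :
    (⨆ T, hlmV avail succ μ p g x T sI) ≤ ⨆ T, hlmV avail succ μ q g x T sI := by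
  have hq0 : ∀ c, 0 ≤ q c := fun c => (hp0 c).trans (hpq c)
  refine ciSup_mono ⟨1, ?_⟩ fun T => hlmV_mono avail succ μ p q g x hgx hp0 hq1 hpq hμ0 T sI
  rintro r ⟨T, rfl⟩
  exact hlmV_le_one avail succ μ q g x hq0 hq1 hμ0 hμ1 T sI
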